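/- arXiv:2007.07183 — 3 statements merged into one kernel-verified Lean document; each statement's English description precedes it below -/
import Mathlib

section
/- Let G = (V, F, E) be a finite self-contained bipartite graph, let S ⊆ F be a minimal self-contained set, and let S2 be a minimal self-contained set of G distinct from S. Then S2 ⊆ F \ S, N(S2) ⊆ V \ N(S), and S2 is a minimal self-contained set of the subgraph G' of G induced by F \ S and V \ N(S). -/
variable {F V : Type*} [Fintype F] [Fintype V] [DecidableEq F] [DecidableEq V]

/-- The adjacency set `N(S)` of a set `S ⊆ F`, restricted to the vertex set `V'`. -/
def subAdj (E : Finset (F × V)) (V' : Finset V) (S : Finset F) : Finset V :=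
  V'.filter fun v => ∃ f ∈ S, (f, v) ∈ E

/-- `S ⊆ F` is a self-contained set (in the bipartite graph with edges `E` whose
variable part is `V'`): `|S| = |N(S)|` and `|S'| ≤ |N(S')|` for every `S' ⊆ S`. -/
def SCSet (E : Finset (F × V)) (V' : Finset V) (S : Finset F) : Prop :=
  S.card = (subAdj E V' S).card ∧ ∀ S' ⊆ S, S'.card ≤ (subAdj E V' S').card

/-- The bipartite graph with equation part `F'`, variable part `V'` and edges `E`
is self-contained: `|F'| = |V'|` and `F'` is self-contained. -/
def SCGraph (E : Finset (F × V)) (F' : Finset F) (V' : Finset V) : Prop :=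
  F'.card = V'.card ∧ SCSet E V' F'

/-- `S` is a minimal self-contained subset of `F'` (variable part `V'`). -/
def MinSCSet (E : Finset (F × V)) (F' : Finset F) (V' : Finset V) (S : Finset F) : Prop :=
  S ⊆ F' ∧ S.Nonempty ∧ SCSet E V' S ∧ ∀ S' ⊂ S, S'.Nonempty → ¬ SCSet E V' S'

lemma subAdj_mono {E : Finset (F × V)} {V' : Finset V} {A B : Finset F} (h : A ⊆ B) :
    subAdj E V' A ⊆ subAdj E V' B := by
  intro v hv
  simp only [subAdj, Finset.mem_filter] at *
  obtain ⟨hv1, f, hf, he⟩ := hv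
  exact ⟨hv1, f, h hf, he⟩

lemma subAdj_union (E : Finset (F × V)) (V' : Finset V) (A B : Finset F) :
    subAdj E V' (A ∪ B) = subAdj E V' A ∪ subAdj E V' B := by
  ext v
  simp only [subAdj, Finset.mem_filter, Finset.mem_union]
  constructor
  · rintro ⟨hv, f, hf | hf, he⟩
    · exact Or.inl ⟨hv, f, hf, he⟩
    · exact Or.inr ⟨hv, f, hf, he⟩
  · rintro (⟨hv, f, hf, he⟩ | ⟨hv, f, hf, he⟩)
    · exact ⟨hv, f, Or.inl hf, he⟩
    · exact ⟨hv, f, Or.inr hf, he⟩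

/-- if `S` and `S₂` are distinct minimal self-contained sets of a finite
self-contained bipartite graph `G`, then `S₂ ⊆ F \ S`, `N(S₂) ⊆ V \ N(S)`, and `S₂` is a
minimal self-contained set of the subgraph of `G` induced by `F \ S` and `V \ N(S)`. -/
theorem minimal_selfContained_of_induced_subgraph (E : Finset (F × V))
    (hG : SCGraph E Finset.univ Finset.univ) (S S₂ : Finset F)
    (hS : MinSCSet E Finset.univ Finset.univ S)
    (hS₂ : MinSCSet E Finset.univ Finset.univ S₂) (hne : S₂ ≠ S) :
    S₂ ⊆ Finset.univ \ S ∧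
    subAdj E Finset.univ S₂ ⊆ Finset.univ \ subAdj E Finset.univ S ∧
    MinSCSet E (Finset.univ \ S) (Finset.univ \ subAdj E Finset.univ S) S₂ := by
  classical
  obtain ⟨-, ⟨-, hall⟩⟩ := hG
  obtain ⟨-, hSne, ⟨hScard, hShall⟩, hSmin⟩ := hS
  obtain ⟨-, hS₂ne, ⟨hS₂card, hS₂hall⟩, hS₂min⟩ := hS₂
  have h1 : (S ∪ S₂).card + (S ∩ S₂).card = S.card + S₂.card :=
    Finset.card_union_add_card_inter S S₂
  have h2 : (subAdj E Finset.univ S ∪ subAdj E Finset.univ S₂).card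
      + (subAdj E Finset.univ S ∩ subAdj E Finset.univ S₂).card
      = (subAdj E Finset.univ S).card + (subAdj E Finset.univ S₂).card :=
    Finset.card_union_add_card_inter _ _
  have h3 : (S ∪ S₂).card ≤ (subAdj E Finset.univ (S ∪ S₂)).card :=
    hall _ (Finset.subset_univ _)
  have hU : subAdj E Finset.univ (S ∪ S₂)
      = subAdj E Finset.univ S ∪ subAdj E Finset.univ S₂ := subAdj_union E Finset.univ S S₂
  have h4 : (subAdj E Finset.univ S ∩ subAdj E Finset.univ S₂).card ≤ (S ∩ S₂).card := by
    rw [hU] at h3; omega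
  have h5 : (subAdj E Finset.univ (S ∩ S₂)).card
      ≤ (subAdj E Finset.univ S ∩ subAdj E Finset.univ S₂).card :=
    Finset.card_le_card (Finset.subset_inter
      (subAdj_mono Finset.inter_subset_left) (subAdj_mono Finset.inter_subset_right))
  have h6 : (S ∩ S₂).card ≤ (subAdj E Finset.univ (S ∩ S₂)).card :=
    hShall _ Finset.inter_subset_left
  -- S and S₂ are disjoint
  have hdisj : S ∩ S₂ = ∅ := by
    by_contra hcontra
    have hne' : (S ∩ S₂).Nonempty := Finset.nonempty_iff_ne_empty.2 hcontra
    have hSC : SCSet E Finset.univ (S ∩ S₂) :=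
      ⟨le_antisymm h6 (h5.trans h4),
        fun T hT => hShall T (hT.trans Finset.inter_subset_left)⟩
    rcases lt_or_eq_of_le (Finset.inter_subset_left : S ∩ S₂ ⊆ S) with hlt | heq
    · exact hSmin _ hlt hne' hSC
    · have hsub : S ⊆ S₂ := Finset.inter_eq_left.mp heq
      rcases lt_or_eq_of_le hsub with hlt | heq'
      · exact hS₂min _ hlt hSne ⟨hScard, hShall⟩
      · exact hne heq'.symm
  -- the adjacency sets are disjoint too
  have hcard0 : (S ∩ S₂).card = 0 := by rw [hdisj]; simp
  have hNdisj : subAdj E Finset.univ S ∩ subAdj E Finset.univ S₂ = ∅ :=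
    Finset.card_eq_zero.mp (le_antisymm (by omega) (Nat.zero_le _))
  -- key: restricted adjacency agrees with full adjacency on subsets of S₂
  have key : ∀ T ⊆ S₂, subAdj E (Finset.univ \ subAdj E Finset.univ S) T
      = subAdj E Finset.univ T := by
    intro T hT
    ext v
    simp only [subAdj, Finset.mem_filter, Finset.mem_sdiff, Finset.mem_univ, true_and]
    constructor
    · rintro ⟨-, hf⟩; exact hf
    · rintro ⟨f, hf, he⟩
      refine ⟨?_, f, hf, he⟩
      intro hvS
      have hvS₂ : v ∈ subAdj E Finset.univ S₂ := by
        simp only [subAdj, Finset.mem_filter, Finset.mem_univ, true_and]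
        exact ⟨f, hT hf, he⟩
      have hvS' : v ∈ subAdj E Finset.univ S := by
        simp only [subAdj, Finset.mem_filter, Finset.mem_univ, true_and]
        exact hvS
      have : v ∈ subAdj E Finset.univ S ∩ subAdj E Finset.univ S₂ :=
        Finset.mem_inter.mpr ⟨hvS', hvS₂⟩
      rw [hNdisj] at this
      exact absurd this (Finset.notMem_empty v)
  have hsub : S₂ ⊆ Finset.univ \ S := by
    intro f hf
    simp only [Finset.mem_sdiff, Finset.mem_univ, true_and]
    intro hfS
    have : f ∈ S ∩ S₂ := Finset.mem_inter.mpr ⟨hfS, hf⟩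
    rw [hdisj] at this
    exact absurd this (Finset.notMem_empty f)
  have hadj : subAdj E Finset.univ S₂ ⊆ Finset.univ \ subAdj E Finset.univ S := by
    intro v hv
    simp only [Finset.mem_sdiff, Finset.mem_univ, true_and]
    intro hvS
    have : v ∈ subAdj E Finset.univ S ∩ subAdj E Finset.univ S₂ :=
      Finset.mem_inter.mpr ⟨hvS, hv⟩
    rw [hNdisj] at this
    exact absurd this (Finset.notMem_empty v)
  have hSC2 : SCSet E (Finset.univ \ subAdj E Finset.univ S) S₂ := by
    constructor
    · rw [key S₂ (Finset.Subset.refl _)]; exact hS₂card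
    · intro T hT
      rw [key T hT]
      exact hS₂hall T hT
  have hmin2 : ∀ T ⊂ S₂, T.Nonempty →
      ¬ SCSet E (Finset.univ \ subAdj E Finset.univ S) T := by
    intro T hT hTne hSC
    apply hS₂min T hT hTne
    obtain ⟨hc, hh⟩ := hSC
    constructor
    · rw [← key T hT.subset]; exact hc
    · intro T' hT'
      rw [← key T' (hT'.trans hT.subset)]
      exact hh T' hT'
  exact ⟨hsub, hadj, hsub, hS₂ne, hSC2, hmin2⟩
end

section
/- Let M be a maximum matching of a finite bipartite graph G = (V, F, E) with coarse decomposition (T_I, T_C, T_O). If a vertex x ∈ T_I is an endpoint of an edge of M, then the other endpoint of that edge also lies in T_I; and if a vertex x ∈ T_O is an endpoint of an edge of M, then the other endpoint of that edge also lies in T_O. -/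
variable {F V : Type*} [Fintype F] [Fintype V] [DecidableEq F] [DecidableEq V]

/-- `M` is a matching of the bipartite graph with edge set `E`:
`M ⊆ E` and no two edges of `M` share an endpoint. -/
def IsMatching (E M : Finset (F × V)) : Prop :=
  M ⊆ E ∧ (∀ e ∈ M, ∀ e' ∈ M, e.1 = e'.1 → e = e') ∧
    ∀ e ∈ M, ∀ e' ∈ M, e.2 = e'.2 → e = e'

/-- `M` is a maximum matching: a matching of greatest cardinality. -/
def IsMaxMatching (E M : Finset (F × V)) : Prop :=
  IsMatching E M ∧ ∀ M' : Finset (F × V), IsMatching E M' → M'.card ≤ M.card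

/-- The (symmetric) adjacency relation of the bipartite graph on `F ⊕ V`. -/
def sumAdj (E : Finset (F × V)) : (F ⊕ V) → (F ⊕ V) → Prop
  | Sum.inl f, Sum.inr v => (f, v) ∈ E
  | Sum.inr v, Sum.inl f => (f, v) ∈ E
  | _, _ => False

/-- The pair of consecutive path vertices forms an edge belonging to `M`. -/
def pairInM (M : Finset (F × V)) : (F ⊕ V) × (F ⊕ V) → Prop
  | (Sum.inl f, Sum.inr v) => (f, v) ∈ M
  | (Sum.inr v, Sum.inl f) => (f, v) ∈ M
  | _ => False

/-- `l` is an `M`-alternating path in the bipartite graph with edge set `E`: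
a nonempty sequence of distinct vertices in which consecutive vertices are joined
by edges of `E` lying alternately inside and outside `M`. -/
def IsAltPath (E M : Finset (F × V)) (l : List (F ⊕ V)) : Prop :=
  l ≠ [] ∧ l.Nodup ∧ l.Chain' (sumAdj E) ∧
    (l.zip l.tail).Chain' fun e e' => pairInM M e ↔ ¬ pairInM M e'

/-- `v ∈ V` is not an endpoint of any edge of `M`. -/
def VUnmatched (M : Finset (F × V)) (v : V) : Prop := ∀ f, (f, v) ∉ M

/-- `f ∈ F` is not an endpoint of any edge of `M`. -/
def FUnmatched (M : Finset (F × V)) (f : F) : Prop := ∀ v, (f, v) ∉ M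

/-- The incomplete set `T_I`: all vertices reachable from some `M`-unmatched
vertex of `V` by a (possibly trivial) `M`-alternating path. -/
def incompleteSet (E M : Finset (F × V)) : Set (F ⊕ V) :=
  {x | ∃ v : V, VUnmatched M v ∧ ∃ l : List (F ⊕ V),
    IsAltPath E M l ∧ l.head? = some (Sum.inr v) ∧ l.getLast? = some x}

/-- The overcomplete set `T_O`: all vertices reachable from some `M`-unmatched
vertex of `F` by a (possibly trivial) `M`-alternating path. -/
def overcompleteSet (E M : Finset (F × V)) : Set (F ⊕ V) :=
  {x | ∃ f : F, FUnmatched M f ∧ ∃ l : List (F ⊕ V),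
    IsAltPath E M l ∧ l.head? = some (Sum.inl f) ∧ l.getLast? = some x}

/-- The complete set `T_C = (V ∪ F) \ (T_I ∪ T_O)`. -/
def completeSet (E M : Finset (F × V)) : Set (F ⊕ V) :=
  Set.univ \ (incompleteSet E M ∪ overcompleteSet E M)

/-!
Let `s` be an unmatched vertex. Along an alternating path from `s`, an edge is matched exactly
when it leaves a vertex of the side opposite to `s`; hence every vertex of `s`'s side other than
`s` is entered along its matching edge. Now let `x` be reached from `s` and `y` its mate. If `x`
lies on `s`'s side, the path enters `x` from `y`, and cutting it at `y` shows that `y` is reached.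
Otherwise the path can be extended by the matching edge `xy`: `y` cannot already lie on it,
since it would be entered from its mate `x`, which is the last vertex.
-/

namespace List

variable {α : Type*} {R : α → α → Prop} {l p q : List α} {x y : α}

theorem IsChain.zip_tail {S : α × α → α × α → Prop}
    (hS : ∀ a b c, R a b → R b c → S (a, b) (b, c)) : ∀ {l : List α}, l.IsChain R →
      (l.zip l.tail).IsChain S
  | [], _ | [_], _ => by simp
  | [_, _], _ => isChain_singleton _
  | a :: b :: c :: t, h => by
    rw [isChain_cons_cons] at h
    have ih := IsChain.zip_tail hS h.2
    rw [tail_cons, zip_cons_cons] at ih ⊢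
    exact ih.cons_cons (hS a b c h.1 (isChain_cons_cons.mp h.2).1)

theorem IsChain.exists_append_cons_cons_of_mem (h : l.IsChain R) (hx : x ∈ l)
    (hhead : l.head? ≠ some x) : ∃ p y q, l = p ++ y :: x :: q ∧ R y x := by
  obtain ⟨s, t, rfl⟩ := append_of_mem hx
  induction s using reverseRecOn with
  | nil => simp at hhead
  | append_singleton p y _ =>
    rw [append_assoc, singleton_append] at h ⊢
    exact ⟨p, y, t, rfl, (isChain_append_cons_cons.mp h).2.1⟩

theorem Nodup.getLast?_ne_of_append_cons_cons (h : (p ++ x :: y :: q).Nodup) :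
    (p ++ x :: y :: q).getLast? ≠ some x := by
  intro hlast
  rw [getLast?_append_cons] at hlast
  have hx : x ∈ y :: q := mem_of_getLast? hlast
  exact (nodup_cons.mp (nodup_middle.mp h)).1 (mem_append_right p hx)

end List

section AlternatingReach

variable {α : Type*} (adj : α → α → Prop) (m : α × α → Prop) (P : α → Prop)

/-- `P` marks the side of the start vertex: an alternating path from an unmatched start leaves
that side along unmatched edges and the other side along matched ones. -/
def AltStep (a b : α) : Prop := adj a b ∧ (m (a, b) ↔ ¬ P a)

def altReach (s : α) : Set α :=
  {x | ∃ l : List α, l.Nodup ∧ l.IsChain (AltStep adj m P) ∧ l.head? = some s ∧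
    l.getLast? = some x}

variable {adj m P}

theorem isChain_altStep_cons (hP : ∀ a b, adj a b → (P b ↔ ¬ P a)) :
    ∀ {a : α} {l : List α}, (a :: l).IsChain adj →
      ((a :: l).zip l).IsChain (fun e e' => m e ↔ ¬ m e') →
      (∀ b ∈ l.head?, m (a, b) ↔ ¬ P a) → (a :: l).IsChain (AltStep adj m P)
  | _, [], _, _, _ => List.isChain_singleton _
  | a, b :: l, hadj, halt, hab => by
    rw [List.isChain_cons_cons] at hadj
    rw [List.zip_cons_cons, List.isChain_cons] at halt
    refine List.isChain_cons_cons.mpr ⟨⟨hadj.1, hab b rfl⟩, ?_⟩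
    refine isChain_altStep_cons hP hadj.2 halt.2 fun c hc => ?_
    obtain ⟨l, rfl⟩ : ∃ l', l = c :: l' := List.head?_eq_some_iff.mp hc
    have := halt.1 (b, c) rfl
    have := hP a b hadj.1
    have := hab b rfl
    tauto

theorem isChain_altStep_iff (hP : ∀ a b, adj a b → (P b ↔ ¬ P a)) {s : α} (hPs : P s)
    (hs : ∀ b, ¬ m (s, b)) {l : List α} (hl : l.head? = some s) :
    l.IsChain (AltStep adj m P) ↔
      l.IsChain adj ∧ (l.zip l.tail).IsChain (fun e e' => m e ↔ ¬ m e') := by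
  refine ⟨fun h => ⟨h.imp fun _ _ hab => hab.1, h.zip_tail fun a b c hab hbc => ?_⟩,
    fun ⟨hadj, halt⟩ => ?_⟩
  · have := hP a b hab.1
    have := hab.2
    have := hbc.2
    tauto
  · obtain ⟨l, rfl⟩ := List.head?_eq_some_iff.mp hl
    exact isChain_altStep_cons hP hadj halt fun b _ => by simp [hs b, hPs]

theorem exists_mate_pred (hP : ∀ a b, adj a b → (P b ↔ ¬ P a)) {l : List α}
    (hl : l.IsChain (AltStep adj m P)) {y : α} (hy : y ∈ l) (hhead : l.head? ≠ some y)
    (hPy : P y) : ∃ p z q, l = p ++ z :: y :: q ∧ m (z, y) := by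
  obtain ⟨p, z, q, rfl, hzy⟩ := hl.exists_append_cons_cons_of_mem hy hhead
  exact ⟨p, z, q, rfl, hzy.2.mpr ((hP z y hzy.1).mp hPy)⟩

variable (hP : ∀ a b, adj a b → (P b ↔ ¬ P a))
  (hm_adj : ∀ a b, m (a, b) → adj a b) (hm_symm : ∀ a b, m (a, b) → m (b, a))
  (hm_unique : ∀ a b c, m (a, b) → m (a, c) → b = c)
include hP hm_symm hm_unique

theorem mem_altReach_of_mate_of_pos {s x y : α} (hs : ∀ b, ¬ m (s, b))
    (hx : x ∈ altReach adj m P s) (hxy : m (x, y)) (hPx : P x) : y ∈ altReach adj m P s := by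
  obtain ⟨l, hnd, hchain, hhead, hlast⟩ := hx
  have hxs : l.head? ≠ some x := by
    rw [hhead]
    rintro ⟨⟩
    exact hs y hxy
  obtain ⟨p, z, q, rfl, hzx⟩ := exists_mate_pred hP hchain (List.mem_of_getLast? hlast) hxs hPx
  obtain rfl : z = y := hm_unique x z y (hm_symm z x hzx) hxy
  have hpre : p ++ [z] <+: p ++ z :: x :: q := ⟨x :: q, by simp⟩
  refine ⟨p ++ [z], hnd.sublist hpre.sublist, hchain.prefix hpre, ?_, List.getLast?_concat⟩
  simpa using hhead

include hm_adj in
theorem mem_altReach_of_mate_of_neg {s x y : α} (hs : ∀ b, ¬ m (s, b))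
    (hx : x ∈ altReach adj m P s) (hxy : m (x, y)) (hPx : ¬ P x) :
    y ∈ altReach adj m P s := by
  obtain ⟨l, hnd, hchain, hhead, hlast⟩ := hx
  have hyl : y ∉ l := by
    intro hy
    have hys : l.head? ≠ some y := by
      rw [hhead]
      rintro ⟨⟩
      exact hs x (hm_symm x s hxy)
    obtain ⟨p, z, q, rfl, hzy⟩ := exists_mate_pred hP hchain hy hys
      ((hP x y (hm_adj x y hxy)).mpr hPx)
    obtain rfl : z = x := hm_unique y z x (hm_symm z y hzy) (hm_symm x y hxy)
    exact hnd.getLast?_ne_of_append_cons_cons hlast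
  obtain ⟨p, rfl⟩ := List.getLast?_eq_some_iff.mp hlast
  refine ⟨p ++ [x] ++ [y], ?_, ?_, ?_, List.getLast?_concat⟩
  · rw [← List.concat_eq_append]
    exact hnd.concat hyl
  · refine hchain.append (List.isChain_singleton y) fun a ha b hb => ?_
    obtain rfl : a = x := by simpa using ha.symm
    obtain rfl : b = y := by simpa using hb.symm
    exact ⟨hm_adj a b hxy, iff_of_true hxy hPx⟩
  · rwa [List.head?_append_of_ne_nil _ (by simp)]

include hm_adj in
theorem mem_altReach_of_mate {s x y : α} (hs : ∀ b, ¬ m (s, b))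
    (hx : x ∈ altReach adj m P s) (hxy : m (x, y)) : y ∈ altReach adj m P s := by
  by_cases hPx : P x
  · exact mem_altReach_of_mate_of_pos hP hm_symm hm_unique hs hx hxy hPx
  · exact mem_altReach_of_mate_of_neg hP hm_adj hm_symm hm_unique hs hx hxy hPx

end AlternatingReach

section Bipartite

omit [Fintype F] [Fintype V] [DecidableEq F] [DecidableEq V]

variable {E M : Finset (F × V)}

theorem sumAdj_isLeft_iff {a b : F ⊕ V} (h : sumAdj E a b) : b.isLeft ↔ ¬ a.isLeft := by
  cases a <;> cases b <;> simp_all [sumAdj]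

theorem sumAdj_isRight_iff {a b : F ⊕ V} (h : sumAdj E a b) : b.isRight ↔ ¬ a.isRight := by
  cases a <;> cases b <;> simp_all [sumAdj]

theorem pairInM_swap {a b : F ⊕ V} (h : pairInM M (a, b)) : pairInM M (b, a) := by
  cases a <;> cases b <;> simp_all [pairInM]

theorem IsMatching.sumAdj_of_pairInM (hM : IsMatching E M) {a b : F ⊕ V}
    (h : pairInM M (a, b)) : sumAdj E a b := by
  cases a <;> cases b
  exacts [h.elim, hM.1 h, hM.1 h, h.elim]

theorem IsMatching.eq_of_pairInM (hM : IsMatching E M) {a b c : F ⊕ V}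
    (hab : pairInM M (a, b)) (hac : pairInM M (a, c)) : b = c := by
  obtain ⟨-, hF, hV⟩ := hM
  rcases a with f | v <;> rcases b with f' | v' <;> rcases c with f'' | v'' <;>
    simp only [pairInM] at hab hac
  · simpa using congrArg Prod.snd (hF _ hab _ hac rfl)
  · simpa using congrArg Prod.fst (hV _ hab _ hac rfl)

theorem VUnmatched.not_pairInM {v : V} (hv : VUnmatched M v) (b : F ⊕ V) :
    ¬ pairInM M (.inr v, b) := by
  rcases b with f | v'
  exacts [hv f, id]

theorem FUnmatched.not_pairInM {f : F} (hf : FUnmatched M f) (b : F ⊕ V) :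
    ¬ pairInM M (.inl f, b) := by
  rcases b with f' | v
  exacts [id, hf v]

theorem exists_isAltPath_iff_mem_altReach {P : F ⊕ V → Prop}
    (hP : ∀ a b, sumAdj E a b → (P b ↔ ¬ P a)) {s x : F ⊕ V} (hPs : P s)
    (hs : ∀ b, ¬ pairInM M (s, b)) :
    (∃ l, IsAltPath E M l ∧ l.head? = some s ∧ l.getLast? = some x) ↔
      x ∈ altReach (sumAdj E) (pairInM M) P s := by
  refine exists_congr fun l => ⟨?_, ?_⟩
  · rintro ⟨⟨-, hnd, hchain⟩, hhead, hlast⟩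
    exact ⟨hnd, (isChain_altStep_iff hP hPs hs hhead).mpr hchain, hhead, hlast⟩
  · rintro ⟨hnd, hchain, hhead, hlast⟩
    refine ⟨⟨?_, hnd, (isChain_altStep_iff hP hPs hs hhead).mp hchain⟩, hhead, hlast⟩
    rintro rfl
    simp at hhead

theorem IsMatching.mem_altReach_of_pairInM (hM : IsMatching E M) {P : F ⊕ V → Prop}
    (hP : ∀ a b, sumAdj E a b → (P b ↔ ¬ P a)) {s x y : F ⊕ V}
    (hs : ∀ b, ¬ pairInM M (s, b)) (hx : x ∈ altReach (sumAdj E) (pairInM M) P s)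
    (hxy : pairInM M (x, y)) : y ∈ altReach (sumAdj E) (pairInM M) P s :=
  mem_altReach_of_mate hP (fun _ _ => hM.sumAdj_of_pairInM) (fun _ _ => pairInM_swap)
    (fun _ _ _ => hM.eq_of_pairInM) hs hx hxy

theorem IsMatching.mem_incompleteSet_of_pairInM (hM : IsMatching E M) {a b : F ⊕ V}
    (hab : pairInM M (a, b)) (ha : a ∈ incompleteSet E M) : b ∈ incompleteSet E M := by
  have hP : ∀ x y, sumAdj E x y → (y.isRight ↔ ¬ x.isRight) := fun _ _ => sumAdj_isRight_iff
  obtain ⟨v, hv, ha⟩ := ha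
  rw [exists_isAltPath_iff_mem_altReach hP rfl hv.not_pairInM] at ha
  exact ⟨v, hv, (exists_isAltPath_iff_mem_altReach hP rfl hv.not_pairInM).mpr
    (hM.mem_altReach_of_pairInM hP hv.not_pairInM ha hab)⟩

theorem IsMatching.mem_overcompleteSet_of_pairInM (hM : IsMatching E M) {a b : F ⊕ V}
    (hab : pairInM M (a, b)) (ha : a ∈ overcompleteSet E M) : b ∈ overcompleteSet E M := by
  have hP : ∀ x y, sumAdj E x y → (y.isLeft ↔ ¬ x.isLeft) := fun _ _ => sumAdj_isLeft_iff
  obtain ⟨f, hf, ha⟩ := ha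
  rw [exists_isAltPath_iff_mem_altReach hP rfl hf.not_pairInM] at ha
  exact ⟨f, hf, (exists_isAltPath_iff_mem_altReach hP rfl hf.not_pairInM).mpr
    (hM.mem_altReach_of_pairInM hP hf.not_pairInM ha hab)⟩

end Bipartite

/-- if a vertex of `T_I` is an endpoint of an edge of the maximum
matching `M`, then the other endpoint of that edge lies in `T_I` as well; and the
same holds for `T_O`. -/
theorem matched_vertices_stay_in_part (E M : Finset (F × V))
    (hM : IsMaxMatching E M) :
    (∀ f v, (f, v) ∈ M →
      (Sum.inl f ∈ incompleteSet E M → Sum.inr v ∈ incompleteSet E M) ∧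
      (Sum.inr v ∈ incompleteSet E M → Sum.inl f ∈ incompleteSet E M)) ∧
    (∀ f v, (f, v) ∈ M →
      (Sum.inl f ∈ overcompleteSet E M → Sum.inr v ∈ overcompleteSet E M) ∧
      (Sum.inr v ∈ overcompleteSet E M → Sum.inl f ∈ overcompleteSet E M)) := by
  obtain ⟨hM, -⟩ := hM
  refine ⟨fun f v hfv => ⟨?_, ?_⟩, fun f v hfv => ⟨?_, ?_⟩⟩
  · exact hM.mem_incompleteSet_of_pairInM (a := .inl f) hfv
  · exact hM.mem_incompleteSet_of_pairInM (a := .inr v) hfv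
  · exact hM.mem_overcompleteSet_of_pairInM (a := .inl f) hfv
  · exact hM.mem_overcompleteSet_of_pairInM (a := .inr v) hfv
end

section
/- Let M be a perfect matching of a finite self-contained bipartite graph G = (V, F, E), and let 𝒮 be the set of strongly connected components of the marginalized oriented graph of G with respect to M. Then for every causal-ordering decomposition of G, the family of its clusters equals {S ∪ M(S) : S ∈ 𝒮}. -/
variable {F V : Type*} [Fintype F] [Fintype V] [DecidableEq F] [DecidableEq V]

/-- `S^(1) ∪ ⋯ ∪ S^(i-1)`, the union of the sets preceding index `i`. -/
def codPrev {n : ℕ} (S : Fin n → Finset F) (i : Fin n) : Finset F :=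
  (Finset.univ.filter fun j => j < i).biUnion S

/-- `(S 0, …, S (n-1))` is a causal-ordering decomposition of the bipartite graph
with edges `E` on the full vertex sets. -/
def IsCOD (E : Finset (F × V)) {n : ℕ} (S : Fin n → Finset F) : Prop :=
  Finset.univ.biUnion S = (Finset.univ : Finset F) ∧
  ∀ i : Fin n,
    MinSCSet E (Finset.univ \ codPrev S i)
      (Finset.univ \ subAdj E Finset.univ (codPrev S i)) (S i)

/-- The cluster of `S^(i)` as a subset of `F ⊕ V`:
`S^(i) ∪ (N(S^(i)) \ N(S^(1) ∪ ⋯ ∪ S^(i-1)))`. -/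
def codClusterSum (E : Finset (F × V)) {n : ℕ} (S : Fin n → Finset F) (i : Fin n) :
    Set (F ⊕ V) :=
  (Sum.inl '' (S i : Set F)) ∪
    (Sum.inr '' ((subAdj E Finset.univ (S i) \ subAdj E Finset.univ (codPrev S i) :
      Finset V) : Set V))

/-- `M` is a perfect matching: a matching covering every vertex of `F` and of `V`. -/
def IsPerfectMatching (E M : Finset (F × V)) : Prop :=
  IsMatching E M ∧ (∀ f : F, ∃ v, (f, v) ∈ M) ∧ ∀ v : V, ∃ f, (f, v) ∈ M

/-- Edge relation of the marginalized oriented graph with respect to `M`. -/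
def margEdge (E M : Finset (F × V)) (v v' : V) : Prop :=
  v ≠ v' ∧ ∃ f : F, (f, v') ∈ M ∧ (f, v) ∈ E ∧ (f, v) ∉ M

/-- Reachability in the marginalized oriented graph. -/
def margReach (E M : Finset (F × V)) : V → V → Prop :=
  Relation.ReflTransGen (margEdge E M)

/-- `C` is a strongly connected component of the marginalized oriented graph. -/
def IsSCC (E M : Finset (F × V)) (C : Set V) : Prop :=
  ∃ v : V, C = {w | margReach E M v w ∧ margReach E M w v}

/-- `M(X)`: the set of vertices of `F` matched by `M` to vertices of `X ⊆ V`. -/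
def matchedF (M : Finset (F × V)) (X : Set V) : Set F :=
  {f | ∃ v ∈ X, (f, v) ∈ M}

/-- The cluster `S ∪ M(S)` of a strongly connected component `S ⊆ V`,
as a subset of `F ⊕ V`. -/
def sccClusterSum (M : Finset (F × V)) (C : Set V) : Set (F ⊕ V) :=
  (Sum.inr '' C) ∪ (Sum.inl '' matchedF M C)


section AuxCOD

variable {F V : Type*} [Fintype F] [Fintype V] [DecidableEq F] [DecidableEq V]

/-- Auxiliary: `A` is relatively closed w.r.t. a forbidden vertex set `W`:
every neighbor of `A` outside `W` is matched (via `m`) into `A`. -/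
def RelCl (E : Finset (F × V)) (m : F → V) (W : Finset V) (A : Finset F) : Prop :=
  ∀ f ∈ A, ∀ v, (f, v) ∈ E → v ∉ W → v ∈ A.image m

/-- Auxiliary: `A` is closed: `N(A) ⊆ m(A)`. -/
def Cl (E : Finset (F × V)) (m : F → V) (A : Finset F) : Prop :=
  ∀ v ∈ subAdj E Finset.univ A, v ∈ A.image m

lemma subAdj_sdiff (E : Finset (F × V)) (W : Finset V) (A : Finset F) :
    subAdj E (Finset.univ \ W) A = subAdj E Finset.univ A \ W := by
  ext v
  simp only [subAdj, Finset.mem_filter, Finset.mem_sdiff, Finset.mem_univ, true_and]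
  tauto

lemma image_subset_subAdj {E M : Finset (F × V)} {m : F → V}
    (hME : M ⊆ E) (hmem : ∀ f v, (f, v) ∈ M ↔ v = m f)
    (W : Finset V) (A : Finset F) (hAW : ∀ f ∈ A, m f ∉ W) :
    A.image m ⊆ subAdj E (Finset.univ \ W) A := by
  intro v hv
  obtain ⟨f, hf, rfl⟩ := Finset.mem_image.mp hv
  rw [subAdj_sdiff]
  refine Finset.mem_sdiff.mpr ⟨?_, hAW f hf⟩
  exact Finset.mem_filter.mpr ⟨Finset.mem_univ _, ⟨f, hf, hME ((hmem f (m f)).mpr rfl)⟩⟩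

lemma scset_of_relCl {E M : Finset (F × V)} {m : F → V}
    (hME : M ⊆ E) (hmem : ∀ f v, (f, v) ∈ M ↔ v = m f)
    (hminj : Function.Injective m) {W : Finset V} {A : Finset F}
    (hAW : ∀ f ∈ A, m f ∉ W) (hcl : RelCl E m W A) :
    subAdj E (Finset.univ \ W) A = A.image m ∧ SCSet E (Finset.univ \ W) A := by
  have heq : subAdj E (Finset.univ \ W) A = A.image m := by
    apply Finset.Subset.antisymm
    · intro v hv
      rw [subAdj_sdiff, Finset.mem_sdiff] at hv
      obtain ⟨hv1, hv2⟩ := hv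
      obtain ⟨-, f, hf, hfv⟩ := Finset.mem_filter.mp hv1
      exact hcl f hf v hfv hv2
    · exact image_subset_subAdj hME hmem W A hAW
  refine ⟨heq, ?_, ?_⟩
  · rw [heq, Finset.card_image_of_injective _ hminj]
  · intro S' hS'
    calc S'.card = (S'.image m).card := (Finset.card_image_of_injective _ hminj).symm
      _ ≤ _ := Finset.card_le_card
          (image_subset_subAdj hME hmem W S' (fun f hf => hAW f (hS' hf)))

lemma relCl_of_scset {E M : Finset (F × V)} {m : F → V}
    (hME : M ⊆ E) (hmem : ∀ f v, (f, v) ∈ M ↔ v = m f)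
    (hminj : Function.Injective m) {W : Finset V} {A : Finset F}
    (hAW : ∀ f ∈ A, m f ∉ W) (hsc : SCSet E (Finset.univ \ W) A) :
    subAdj E (Finset.univ \ W) A = A.image m ∧ RelCl E m W A := by
  have heq : A.image m = subAdj E (Finset.univ \ W) A :=
    Finset.eq_of_subset_of_card_le (image_subset_subAdj hME hmem W A hAW)
      (by rw [Finset.card_image_of_injective _ hminj, ← hsc.1])
  refine ⟨heq.symm, fun f hf v hfv hvW => ?_⟩
  rw [heq, subAdj_sdiff, Finset.mem_sdiff]
  exact ⟨Finset.mem_filter.mpr ⟨Finset.mem_univ _, f, hf, hfv⟩, hvW⟩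

lemma cl_union {E : Finset (F × V)} {m : F → V} {P A : Finset F}
    (hP : Cl E m P) (hrel : RelCl E m (P.image m) A) :
    Cl E m (P ∪ A) := by
  intro v hv
  obtain ⟨-, f, hf, hfv⟩ := Finset.mem_filter.mp hv
  rw [Finset.image_union]
  rcases Finset.mem_union.mp hf with hfP | hfA
  · exact Finset.mem_union_left _
      (hP v (Finset.mem_filter.mpr ⟨Finset.mem_univ _, f, hfP, hfv⟩))
  · by_cases hvP : v ∈ P.image m
    · exact Finset.mem_union_left _ hvP
    · exact Finset.mem_union_right _ (hrel f hfA v hfv hvP)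

lemma reach_closed {E M : Finset (F × V)} {D : Set V}
    (hD : ∀ a b, margEdge E M a b → b ∈ D → a ∈ D) :
    ∀ a b, margReach E M a b → b ∈ D → a ∈ D := by
  intro a b h
  induction h with
  | refl => exact id
  | tail _ e ih => exact fun hb => ih (hD _ _ e hb)

lemma exists_matchFun (E M : Finset (F × V)) (hM : IsPerfectMatching E M) :
    ∃ m : F → V, Function.Injective m ∧ Function.Surjective m ∧
      ∀ f v, (f, v) ∈ M ↔ v = m f := by
  choose m hm using hM.2.1
  refine ⟨m, ?_, ?_, ?_⟩
  · intro f f' h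
    have := hM.1.2.2 (f, m f) (hm f) (f', m f') (hm f') h
    exact (Prod.ext_iff.mp this).1
  · intro v
    obtain ⟨f, hf⟩ := hM.2.2 v
    refine ⟨f, ?_⟩
    have := hM.1.2.1 (f, v) hf (f, m f) (hm f) rfl
    exact ((Prod.ext_iff.mp this).2).symm
  · intro f v
    constructor
    · intro h
      have := hM.1.2.1 (f, v) h (f, m f) (hm f) rfl
      exact (Prod.ext_iff.mp this).2
    · rintro rfl; exact hm f

lemma scc_of_min {E M : Finset (F × V)} {m : F → V}
    (hME : M ⊆ E) (hmem : ∀ f v, (f, v) ∈ M ↔ v = m f)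
    (hminj : Function.Injective m) {W : Finset V} {A : Finset F}
    (hAW : ∀ f ∈ A, m f ∉ W) (hrel : RelCl E m W A)
    (hWcl : ∀ a b, margEdge E M a b → b ∈ W → a ∈ W)
    (hmin : ∀ S' ⊂ A, S'.Nonempty → ¬ SCSet E (Finset.univ \ W) S')
    {f₀ : F} (hf₀ : f₀ ∈ A) :
    (↑(A.image m) : Set V) = {w | margReach E M (m f₀) w ∧ margReach E M w (m f₀)} := by
  classical
  have hE2 : ∀ a b, margEdge E M a b → b ∈ A.image m → a ∉ W → a ∈ A.image m := by
    rintro a b ⟨hne, f, hfb, hfa, hfnM⟩ hb ha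
    obtain ⟨g, hg, hgb⟩ := Finset.mem_image.mp hb
    have hfg : f = g := hminj (by rw [← (hmem f b).mp hfb, hgb])
    exact hrel g hg a (hfg ▸ hfa) ha
  have hR2 : ∀ a b, margReach E M a b → (b ∈ A.image m ∨ b ∈ W) →
      (a ∈ A.image m ∨ a ∈ W) := by
    refine reach_closed (D := {x | x ∈ A.image m ∨ x ∈ W}) ?_
    intro a b e hb
    rcases hb with hb | hb
    · by_cases haW : a ∈ W
      · exact Or.inr haW
      · exact Or.inl (hE2 a b e hb haW)
    · exact Or.inr (hWcl a b e hb)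
  have hR3 : ∀ f ∈ A, ∀ g ∈ A, margReach E M (m g) (m f) := by
    intro f hf
    set A' := A.filter (fun g => margReach E M (m g) (m f)) with hA'def
    have hsub : A' ⊆ A := Finset.filter_subset _ _
    have hne : A'.Nonempty :=
      ⟨f, Finset.mem_filter.mpr ⟨hf, Relation.ReflTransGen.refl⟩⟩
    have hAW' : ∀ g ∈ A', m g ∉ W := fun g hg => hAW g (hsub hg)
    have hrel' : RelCl E m W A' := by
      intro g hg w hgw hwW
      obtain ⟨hgA, hgr⟩ := Finset.mem_filter.mp hg
      by_cases hwg : w = m g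
      · exact Finset.mem_image.mpr ⟨g, hg, hwg.symm⟩
      · obtain ⟨g', hg', rfl⟩ := Finset.mem_image.mp (hrel g hgA w hgw hwW)
        have hedge : margEdge E M (m g') (m g) :=
          ⟨hwg, g, (hmem g (m g)).mpr rfl, hgw, fun hc => hwg ((hmem g (m g')).mp hc)⟩
        have hreach : margReach E M (m g') (m f) :=
          Relation.ReflTransGen.head hedge hgr
        exact Finset.mem_image.mpr ⟨g', Finset.mem_filter.mpr ⟨hg', hreach⟩, rfl⟩
    have hsc := (scset_of_relCl hME hmem hminj hAW' hrel').2
    have hAA : A' = A := by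
      by_contra hne'
      exact hmin A' (Finset.ssubset_iff_subset_ne.mpr ⟨hsub, hne'⟩) hne hsc
    intro g hg
    exact (Finset.mem_filter.mp (hAA ▸ hg : g ∈ A')).2
  ext w
  simp only [Finset.coe_image, Set.mem_image, Finset.mem_coe, Set.mem_setOf_eq]
  constructor
  · rintro ⟨g, hg, rfl⟩
    exact ⟨hR3 g hg f₀ hf₀, hR3 f₀ hf₀ g hg⟩
  · rintro ⟨h1, h2⟩
    have hv0 : m f₀ ∈ A.image m := Finset.mem_image_of_mem m hf₀
    rcases hR2 w (m f₀) h2 (Or.inl hv0) with hw | hw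
    · obtain ⟨g, hg, hgw⟩ := Finset.mem_image.mp hw
      exact ⟨g, hg, hgw⟩
    · have : m f₀ ∈ W :=
        reach_closed (D := fun x => x ∈ W) (fun a b e hb => hWcl a b e hb)
          (m f₀) w h1 hw
      exact absurd this (hAW f₀ hf₀)

end AuxCOD

/-- for a perfect matching `M` of a finite self-contained bipartite
graph, the family of clusters of every causal-ordering decomposition equals the
family `{S ∪ M(S) : S a strongly connected component of the marginalized oriented
graph}`. -/
theorem cod_clusters_eq_scc_clusters (E M : Finset (F × V))
    (hG : SCGraph E Finset.univ Finset.univ) (hM : IsPerfectMatching E M)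
    {n : ℕ} (S : Fin n → Finset F) (hS : IsCOD E S) :
    {X : Set (F ⊕ V) | ∃ i : Fin n, X = codClusterSum E S i} =
      {X : Set (F ⊕ V) | ∃ C : Set V, IsSCC E M C ∧ X = sccClusterSum M C} := by
  classical
  obtain ⟨m, hminj, hmsurj, hmem⟩ := exists_matchFun E M hM
  have hME : M ⊆ E := hM.1.1
  -- closedness of codPrev from closedness of earlier blocks
  have clPrev : ∀ i : Fin n, (∀ j : Fin n, j < i → Cl E m (codPrev S j ∪ S j)) →
      Cl E m (codPrev S i) := by
    intro i hprev v hv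
    obtain ⟨-, f, hf, hfv⟩ := Finset.mem_filter.mp hv
    rw [codPrev] at hf
    obtain ⟨j, hj, hfj⟩ := Finset.mem_biUnion.mp hf
    have hji : j < i := (Finset.mem_filter.mp hj).2
    have hfj' : f ∈ codPrev S j ∪ S j := Finset.mem_union_right _ hfj
    have hmem' : v ∈ (codPrev S j ∪ S j).image m :=
      hprev j hji v (Finset.mem_filter.mpr ⟨Finset.mem_univ _, f, hfj', hfv⟩)
    refine Finset.image_subset_image ?_ hmem'
    intro g hg
    rcases Finset.mem_union.mp hg with hg | hg
    · rw [codPrev] at hg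
      obtain ⟨k, hk, hgk⟩ := Finset.mem_biUnion.mp hg
      exact Finset.mem_biUnion.mpr ⟨k, Finset.mem_filter.mpr
        ⟨Finset.mem_univ _, lt_trans (Finset.mem_filter.mp hk).2 hji⟩, hgk⟩
    · exact Finset.mem_biUnion.mpr ⟨j, Finset.mem_filter.mpr ⟨Finset.mem_univ _, hji⟩, hg⟩
  -- per-index facts derived from closedness of codPrev
  have deriv : ∀ i : Fin n, Cl E m (codPrev S i) →
      subAdj E Finset.univ (codPrev S i) = (codPrev S i).image m ∧
      subAdj E (Finset.univ \ (codPrev S i).image m) (S i) = (S i).image m ∧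
      RelCl E m ((codPrev S i).image m) (S i) ∧
      (∀ f ∈ S i, m f ∉ (codPrev S i).image m) ∧
      Cl E m (codPrev S i ∪ S i) := by
    intro i hClP
    have hPeq : subAdj E Finset.univ (codPrev S i) = (codPrev S i).image m := by
      apply Finset.Subset.antisymm hClP
      have h2 := image_subset_subAdj (m := m) hME hmem ∅ (codPrev S i)
        (by simp)
      rwa [Finset.sdiff_empty] at h2
    have hSP : S i ⊆ Finset.univ \ codPrev S i := (hS.2 i).1
    have hAW : ∀ f ∈ S i, m f ∉ (codPrev S i).image m := by
      intro f hf hmf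
      obtain ⟨g, hg, hgf⟩ := Finset.mem_image.mp hmf
      have hgf' : g = f := hminj hgf
      exact (Finset.mem_sdiff.mp (hSP hf)).2 (hgf' ▸ hg)
    have hsc : SCSet E (Finset.univ \ (codPrev S i).image m) (S i) := by
      have h3 := (hS.2 i).2.2.1
      rwa [hPeq] at h3
    obtain ⟨heq, hrel⟩ := relCl_of_scset hME hmem hminj hAW hsc
    exact ⟨hPeq, heq, hrel, hAW, cl_union hClP hrel⟩
  -- strong induction giving closedness of all initial segments
  have keyCl : ∀ k : ℕ, ∀ i : Fin n, (i : ℕ) = k → Cl E m (codPrev S i ∪ S i) := by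
    intro k
    induction k using Nat.strong_induction_on with
    | _ k ih =>
      intro i hk
      have hClP : Cl E m (codPrev S i) := by
        refine clPrev i (fun j hj => ih (j : ℕ) ?_ j rfl)
        have : (j : ℕ) < (i : ℕ) := hj
        omega
      exact (deriv i hClP).2.2.2.2
  have hClP : ∀ i : Fin n, Cl E m (codPrev S i) :=
    fun i => clPrev i (fun j _ => keyCl (j : ℕ) j rfl)
  have hfacts := fun i => deriv i (hClP i)
  -- predecessor-closedness of m(codPrev) in the marginalized graph
  have hWcl : ∀ i : Fin n, ∀ a b, margEdge E M a b →
      b ∈ (codPrev S i).image m → a ∈ (codPrev S i).image m := by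
    rintro i a b ⟨hne, f, hfb, hfa, -⟩ hb
    obtain ⟨g, hg, hgb⟩ := Finset.mem_image.mp hb
    have hfg : f = g := hminj (by rw [← (hmem f b).mp hfb, hgb])
    exact hClP i a (Finset.mem_filter.mpr ⟨Finset.mem_univ _, f,
      (by rw [hfg]; exact hg), hfa⟩)
  -- m(S i) is an SCC
  have hsccEq : ∀ i : Fin n, ∀ f₀ ∈ S i,
      (↑((S i).image m) : Set V) =
        {w | margReach E M (m f₀) w ∧ margReach E M w (m f₀)} := by
    intro i f₀ hf₀
    have hmin : ∀ S' ⊂ S i, S'.Nonempty →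
        ¬ SCSet E (Finset.univ \ (codPrev S i).image m) S' := by
      have h4 := (hS.2 i).2.2.2
      rwa [(hfacts i).1] at h4
    exact scc_of_min hME hmem hminj ((hfacts i).2.2.2.1) ((hfacts i).2.2.1)
      (hWcl i) hmin hf₀
  -- the cluster of S i equals the SCC cluster of m(S i)
  have hSm : ∀ i : Fin n, subAdj E Finset.univ (S i) \
      subAdj E Finset.univ (codPrev S i) = (S i).image m := by
    intro i
    rw [(hfacts i).1, ← subAdj_sdiff]
    exact (hfacts i).2.1
  have hcluster : ∀ i : Fin n,
      codClusterSum E S i = sccClusterSum M (↑((S i).image m)) := by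
    intro i
    rw [codClusterSum, hSm i, sccClusterSum, Set.union_comm]
    congr 1
    ext x
    simp only [Set.mem_image, Finset.mem_coe]
    constructor
    · rintro ⟨g, hg, rfl⟩
      exact ⟨g, ⟨m g, Finset.mem_coe.mpr (Finset.mem_image_of_mem m hg),
        (hmem g (m g)).mpr rfl⟩, rfl⟩
    · rintro ⟨g, ⟨v, hv, hvM⟩, rfl⟩
      have hvg : v = m g := (hmem g v).mp hvM
      subst hvg
      obtain ⟨g', hg', hg'g⟩ := Finset.mem_image.mp (Finset.mem_coe.mp hv)
      exact ⟨g, by rw [← hminj hg'g]; exact hg', rfl⟩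
  -- conclusion
  ext X
  simp only [Set.mem_setOf_eq]
  constructor
  · rintro ⟨i, rfl⟩
    obtain ⟨f₀, hf₀⟩ := (hS.2 i).2.1
    exact ⟨↑((S i).image m), ⟨m f₀, hsccEq i f₀ hf₀⟩, hcluster i⟩
  · rintro ⟨C, ⟨v₀, rfl⟩, rfl⟩
    obtain ⟨f₀, hf₀M⟩ := hM.2.2 v₀
    have hv₀ : v₀ = m f₀ := (hmem f₀ v₀).mp hf₀M
    subst hv₀
    have hf₀u : f₀ ∈ Finset.univ.biUnion S := hS.1 ▸ Finset.mem_univ f₀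
    obtain ⟨i, -, hfi⟩ := Finset.mem_biUnion.mp hf₀u
    refine ⟨i, ?_⟩
    rw [hcluster i, hsccEq i f₀ hfi]
end
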